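/- arXiv:1801.00576 — 7 statements merged into one kernel-verified Lean document; each statement's English description precedes it below -/
import Mathlib

section
/- Let L be a first-order language, let M be an infinite L-structure, and let A be a finitary group of automorphisms of M. Then the locally finite core M_* is the underlying set of an elementary substructure of M, and this substructure is locally finite (every finitely generated substructure of it is finite). -/
open FirstOrder Language

namespace StructAut

variable {L : Language} {M : Type*} [L.Structure M]

/-- The group of `L`-automorphisms of `M`, under composition. -/
instance group (L : Language) (M : Type*) [L.Structure M] : Group (M ≃[L] M) where
  mul f g := f.comp g
  one := FirstOrder.Language.Equiv.refl L M
  inv := FirstOrder.Language.Equiv.symm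
  mul_assoc a b c := FirstOrder.Language.Equiv.comp_assoc c b a
  one_mul := FirstOrder.Language.Equiv.refl_comp
  mul_one := FirstOrder.Language.Equiv.comp_refl
  inv_mul_cancel := FirstOrder.Language.Equiv.symm_comp_self

/-- The orbit of an element `m` of `M` under a group `A` of automorphisms of `M`. -/
def orbit (A : Subgroup (M ≃[L] M)) (m : M) : Set M :=
  {y : M | ∃ α ∈ A, α m = y}

/-- A group `A` of automorphisms of an `L`-structure `M` is *finitary* if it is infinite,
every non-identity element of `A` has a finite set of fixed points, and every nonempty
subset of `M` definable with parameters from `M` that is setwise invariant under some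
non-identity element of `A` contains a point with finite `A`-orbit. -/
def IsFinitary (L : Language) (M : Type*) [L.Structure M] (A : Subgroup (M ≃[L] M)) : Prop :=
  Infinite A ∧
  (∀ α ∈ A, α ≠ 1 → {m : M | α m = m}.Finite) ∧
  ∀ X : Set M, X.Nonempty → (Set.univ : Set M).Definable₁ L X →
    (∃ α ∈ A, α ≠ 1 ∧ (fun m => α m) '' X = X) →
    ∃ x ∈ X, (orbit A x).Finite

/-- The locally finite core `M_*`: the set of elements of `M` with finite `A`-orbit. -/
def core (L : Language) (M : Type*) [L.Structure M] (A : Subgroup (M ≃[L] M)) : Set M :=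
  {m : M | (orbit A m).Finite}

end StructAut

open StructAut

namespace StructAutAux

variable {L : Language} {M : Type*} [L.Structure M]

/-- Pigeonhole: an infinite group of automorphisms contains a non-identity element fixing
any given tuple of elements with finite orbits. -/
lemma exists_ne_one_fixing (A : Subgroup (M ≃[L] M)) (hInf : Infinite A) {n : ℕ}
    (c : Fin n → M) (hc : ∀ i, c i ∈ core L M A) :
    ∃ α ∈ A, α ≠ 1 ∧ ∀ i, α (c i) = c i := by
  haveI : ∀ i, Finite (orbit A (c i)) := fun i => (hc i).to_subtype
  let F : A → ∀ i, orbit A (c i) := fun α i => ⟨α.1 (c i), α.1, α.2, rfl⟩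
  obtain ⟨α, β, hne, hFeq⟩ := Finite.exists_ne_map_eq_of_infinite F
  have heq : ∀ i, (α : M ≃[L] M) (c i) = (β : M ≃[L] M) (c i) := fun i =>
    congrArg Subtype.val (congrFun hFeq i)
  refine ⟨((β⁻¹ * α : A) : M ≃[L] M), (β⁻¹ * α : A).2, ?_, ?_⟩
  · intro h1
    apply hne
    have h2 : (β : M ≃[L] M)⁻¹ * (α : M ≃[L] M) = 1 := h1
    exact Subtype.ext (inv_mul_eq_one.mp h2).symm
  · intro i
    show (β : M ≃[L] M).symm ((α : M ≃[L] M) (c i)) = c i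
    rw [heq i]
    exact (β : M ≃[L] M).symm_apply_apply (c i)

/-- The fixed points of an automorphism form a substructure. -/
def fixSub (α : M ≃[L] M) : L.Substructure M where
  carrier := {m : M | α m = m}
  fun_mem := by
    intro n f x hx
    show α (Structure.funMap f x) = Structure.funMap f x
    rw [HomClass.map_fun α f x]
    congr 1
    funext i
    exact hx i

/-- The core is a substructure. -/
def coreSub (A : Subgroup (M ≃[L] M)) : L.Substructure M where
  carrier := core L M A
  fun_mem := by
    intro n f x hx
    have hsub : orbit A (Structure.funMap f x) ⊆
        (fun y : Fin n → M => Structure.funMap f y) ''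
          Set.pi Set.univ (fun i => orbit A (x i)) := by
      rintro y ⟨α, hα, rfl⟩
      exact ⟨⇑α ∘ x, fun i _ => ⟨α, hα, rfl⟩, (HomClass.map_fun α f x).symm⟩
    exact Set.Finite.subset ((Set.Finite.pi (fun i => hx i)).image _) hsub

lemma snoc_comp (α : M ≃[L] M) {n : ℕ} (c : Fin n → M) (hfix : ∀ i, α (c i) = c i) (a : M) :
    ⇑α ∘ (Fin.snoc c a : Fin (n + 1) → M) = Fin.snoc c (α a) := by
  funext i
  simp only [Function.comp_apply, Fin.snoc]
  split_ifs with h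
  · simp only [cast_eq]
    exact hfix _
  · simp

lemma definable_snoc {n : ℕ} (φ : L.BoundedFormula Empty (n + 1)) (c : Fin n → M) :
    (Set.univ : Set M).Definable₁ L {m : M | φ.Realize default (Fin.snoc c m : _ → M)} := by
  rw [Set.Definable₁, Set.definable_iff_exists_formula_sum]
  refine ⟨φ.toFormula.relabel (Sum.elim (fun e : Empty => e.elim)
    (fun i : Fin (n + 1) => if h : (i : ℕ) < n then
      Sum.inl ⟨c ⟨(i : ℕ), h⟩, Set.mem_univ _⟩ else Sum.inr 0)), ?_⟩
  ext v
  have key : ∀ v : Fin 1 → M,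
      ((φ.toFormula.relabel (Sum.elim (fun e : Empty => e.elim)
        (fun i : Fin (n + 1) => if h : (i : ℕ) < n then
          Sum.inl ⟨c ⟨(i : ℕ), h⟩, Set.mem_univ _⟩ else Sum.inr 0))).Realize
            (Sum.elim (Subtype.val : ↥(Set.univ : Set M) → M) v) ↔
        φ.Realize default (Fin.snoc c (v 0) : _ → M)) := by
    intro v
    rw [Formula.realize_relabel, BoundedFormula.realize_toFormula]
    have h1 : ((Sum.elim (Subtype.val : ↥(Set.univ : Set M) → M) v) ∘
        (Sum.elim (fun e : Empty => e.elim)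
          (fun i : Fin (n + 1) => if h : (i : ℕ) < n then
            Sum.inl ⟨c ⟨(i : ℕ), h⟩, Set.mem_univ _⟩ else Sum.inr 0))) ∘ Sum.inl
        = (default : Empty → M) := Subsingleton.elim _ _
    have h2 : ((Sum.elim (Subtype.val : ↥(Set.univ : Set M) → M) v) ∘
        (Sum.elim (fun e : Empty => e.elim)
          (fun i : Fin (n + 1) => if h : (i : ℕ) < n then
            Sum.inl ⟨c ⟨(i : ℕ), h⟩, Set.mem_univ _⟩ else Sum.inr 0))) ∘ Sum.inr
        = (Fin.snoc c (v 0) : _ → M) := by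
      funext i
      simp only [Function.comp_apply, Sum.elim_inr, Fin.snoc]
      split_ifs with h
      · simp only [Sum.elim_inl, cast_eq]
        rfl
      · simp
    rw [h1, h2]
  rw [Set.mem_setOf_eq]
  exact (key v).symm

end StructAutAux

open StructAutAux

/-- If `M` is an infinite `L`-structure and `A` is a finitary group of
automorphisms of `M`, then the locally finite core `M_*` is the underlying set of an
elementary substructure of `M`, and this substructure is locally finite: the substructure
generated by any finite subset of it is finite. -/
theorem locallyFiniteCore_elementarySubstructure
    (L : Language) (M : Type*) [L.Structure M] [Infinite M]
    (A : Subgroup (M ≃[L] M)) (hA : IsFinitary L M A) :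
    ∃ S : L.ElementarySubstructure M,
      (S : Set M) = core L M A ∧
      ∀ s : Finset M, (s : Set M) ⊆ (S : Set M) →
        ((Substructure.closure L (s : Set M) : L.Substructure M) : Set M).Finite := by
  obtain ⟨hInf, hFix, hDef⟩ := hA
  -- Tarski–Vaught test for the core substructure
  have htv : ∀ (n : ℕ) (φ : L.BoundedFormula Empty (n + 1))
      (x : Fin n → (coreSub A : L.Substructure M)) (a : M),
      φ.Realize default (Fin.snoc ((↑) ∘ x) a : _ → M) →
        ∃ b : (coreSub A : L.Substructure M),
          φ.Realize default (Fin.snoc ((↑) ∘ x) b : _ → M) := by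
    intro n φ x a ha
    set c : Fin n → M := (↑) ∘ x with hc
    have hcore : ∀ i, c i ∈ core L M A := fun i => (x i).2
    set X : Set M := {m : M | φ.Realize default (Fin.snoc c m : _ → M)} with hX
    have hXne : X.Nonempty := ⟨a, ha⟩
    have hXdef : (Set.univ : Set M).Definable₁ L X := definable_snoc φ c
    obtain ⟨α, hαA, hα1, hαfix⟩ := exists_ne_one_fixing A hInf c hcore
    have hd : ⇑α ∘ (default : Empty → M) = default := Subsingleton.elim _ _
    have hXinv : (fun m => α m) '' X = X := by
      apply Set.eq_of_subset_of_subset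
      · rintro _ ⟨m, hm, rfl⟩
        have h := (StrongHomClass.realize_boundedFormula α φ
          (v := (default : Empty → M)) (xs := Fin.snoc c m)).mpr hm
        rwa [hd, snoc_comp α c hαfix m] at h
      · intro m hm
        refine ⟨α.symm m, ?_, α.apply_symm_apply m⟩
        have h : φ.Realize (⇑α ∘ (default : Empty → M))
            (⇑α ∘ (Fin.snoc c (α.symm m) : _ → M)) := by
          rw [hd, snoc_comp α c hαfix (α.symm m), α.apply_symm_apply m]
          exact hm
        exact (StrongHomClass.realize_boundedFormula α φ).mp h
    obtain ⟨b, hbX, hbcore⟩ := hDef X hXne hXdef ⟨α, hαA, hα1, hXinv⟩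
    exact ⟨⟨b, hbcore⟩, hbX⟩
  refine ⟨(coreSub A).toElementarySubstructure htv, rfl, ?_⟩
  intro s hs
  have hsc : ∀ m ∈ s, m ∈ core L M A := fun m hm => hs hm
  let e := s.equivFin
  obtain ⟨α, hαA, hα1, hαfix⟩ := exists_ne_one_fixing A hInf
    (fun i : Fin s.card => (e.symm i : M)) (fun i => hsc _ (e.symm i).2)
  have hfixall : ∀ m ∈ s, α m = m := by
    intro m hm
    have := hαfix (e ⟨m, hm⟩)
    rwa [e.symm_apply_apply] at this
  have hle : Substructure.closure L (s : Set M) ≤ fixSub α := by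
    rw [Substructure.closure_le]
    intro m hm
    exact hfixall m hm
  exact Set.Finite.subset (hFix α hαA hα1) hle
end

section
/- Let L be a first-order language, let M be an infinite L-structure, and let A be a finitary group of automorphisms of M. Then the locally finite core M_* is infinite. -/
open FirstOrder Language

open StructAut

/-!
If the core were finite, its complement would be a nonempty set, definable with finitely many
parameters, and invariant under all of `A` (an orbit is finite or not simultaneously for all
its points). Any non-identity element of the infinite group `A` then makes the finitary
condition produce a point of finite orbit outside the core, which is absurd.
-/

namespace Set

variable {L : Language} {M : Type*} [L.Structure M] {A s : Set M}

theorem Definable₁.compl (hs : A.Definable₁ L s) : A.Definable₁ L sᶜ :=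
  Definable.compl hs

theorem Finite.definable₁_of_subset (hs : s.Finite) (hsA : s ⊆ A) : A.Definable₁ L s := by
  have : Finite s := hs
  have hunion : {x : Fin 1 → M | x 0 ∈ s} = ⋃ a : s, {x | x 0 ∈ ({(a : M)} : Set M)} := by
    ext x
    simp
  unfold Definable₁
  rw [hunion]
  exact definable_iUnion_of_finite fun a => Definable.singleton_of_mem L (hsA a.2)

end Set

namespace StructAut

variable {L : Language} {M : Type*} [L.Structure M] {A : Subgroup (M ≃[L] M)} {α : M ≃[L] M}

theorem orbit_apply (hα : α ∈ A) (m : M) : orbit A (α m) = orbit A m := by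
  ext y
  constructor
  · rintro ⟨β, hβ, rfl⟩
    exact ⟨β * α, A.mul_mem hβ hα, rfl⟩
  · rintro ⟨β, hβ, rfl⟩
    exact ⟨β * α⁻¹, A.mul_mem hβ (A.inv_mem hα), congrArg β (α.symm_apply_apply m)⟩

theorem apply_mem_core_iff (hα : α ∈ A) {m : M} : α m ∈ core L M A ↔ m ∈ core L M A := by
  simp only [core, Set.mem_ofPred_eq, orbit_apply hα]

theorem image_compl_core (hα : α ∈ A) :
    (fun m => α m) '' (core L M A)ᶜ = (core L M A)ᶜ := by
  have hpre : (fun m => α m) ⁻¹' (core L M A)ᶜ = (core L M A)ᶜ := by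
    ext m
    simp only [Set.mem_preimage, Set.mem_compl_iff, apply_mem_core_iff hα]
  conv_lhs => rw [← hpre]
  exact α.surjective.image_preimage _

end StructAut

/-- If `M` is an infinite `L`-structure and `A` is a finitary group of
automorphisms of `M`, then the locally finite core `M_*` is infinite. -/
theorem locallyFiniteCore_infinite
    (L : Language) (M : Type*) [L.Structure M] [Infinite M]
    (A : Subgroup (M ≃[L] M)) (hA : IsFinitary L M A) :
    (core L M A).Infinite := by
  intro hcore
  obtain ⟨hAinf, -, hfinitary⟩ := hA
  have : Nontrivial A := Infinite.instNontrivial A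
  obtain ⟨α, hα⟩ := exists_ne (1 : A)
  have hdef : (Set.univ : Set M).Definable₁ L (core L M A)ᶜ :=
    (hcore.definable₁_of_subset (Set.subset_univ _)).compl
  obtain ⟨x, hx, hxcore⟩ := hfinitary _ hcore.infinite_compl.nonempty hdef
    ⟨α, α.2, by simpa using hα, image_compl_core α.2⟩
  exact hx hxcore
end

section
/- Let L be a first-order language, let M be an infinite L-structure, and let A be a finitary group of automorphisms of M. Then for any finitely many elements x_1, …, x_n of the locally finite core M_*, the substructure of M generated by x_1, …, x_n is finite and is contained in M_*. In particular, M_* is closed under all function symbols of L and is a locally finite substructure of M. -/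
open FirstOrder Language

open StructAut

/-- If `M` is an infinite `L`-structure and `A` is a finitary group of
automorphisms of `M`, then for any finitely many elements `x 0, …, x (n-1)` of the locally
finite core `M_*`, the substructure of `M` generated by them is finite and contained in
`M_*`; in particular `M_*` is (the underlying set of) a substructure of `M`, which is
locally finite. -/
theorem locallyFiniteCore_finitelyGenerated_finite
    (L : Language) (M : Type*) [L.Structure M] [Infinite M]
    (A : Subgroup (M ≃[L] M)) (hA : IsFinitary L M A) :
    (∀ (n : ℕ) (x : Fin n → M), (∀ i, x i ∈ core L M A) →
      ((Substructure.closure L (Set.range x) : L.Substructure M) : Set M).Finite ∧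
      ((Substructure.closure L (Set.range x) : L.Substructure M) : Set M) ⊆ core L M A) ∧
    ∃ S : L.Substructure M, (S : Set M) = core L M A := by
  obtain ⟨hInf, hFix, -⟩ := hA
  -- Key lemma: for a finite A-invariant set S, the closure of S is finite and in the core.
  have key : ∀ S : Set M, S.Finite → (∀ α ∈ A, ∀ s ∈ S, α s ∈ S) →
      ((Substructure.closure L S : L.Substructure M) : Set M).Finite ∧
      ((Substructure.closure L S : L.Substructure M) : Set M) ⊆ core L M A := by
    intro S hSfin hSinv
    -- find a non-identity γ ∈ A fixing S pointwise
    obtain ⟨γ, hγA, hγ1, hγfix⟩ :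
        ∃ γ ∈ A, γ ≠ 1 ∧ ∀ s ∈ S, γ s = s := by
      haveI := hSfin.to_subtype
      haveI : Finite (↥S → ↥S) := Pi.finite
      let φ : A → (↥S → ↥S) := fun α s => ⟨(α : M ≃[L] M) s, hSinv α α.2 s s.2⟩
      obtain ⟨α, β, hne, hEq⟩ := Finite.exists_ne_map_eq_of_infinite φ
      refine ⟨(α : M ≃[L] M) * ((β : M ≃[L] M))⁻¹, A.mul_mem α.2 (A.inv_mem β.2), ?_, ?_⟩
      · intro h
        apply hne
        have : (α : M ≃[L] M) = (β : M ≃[L] M) := by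
          have := mul_inv_eq_one.mp h
          exact this
        exact Subtype.ext this
      · intro s hs
        have hβs : (β : M ≃[L] M).symm s ∈ S := hSinv _ (A.inv_mem β.2) s hs
        have h1 : (α : M ≃[L] M) ((β : M ≃[L] M).symm s)
            = (β : M ≃[L] M) ((β : M ≃[L] M).symm s) := by
          have := congrFun hEq ⟨(β : M ≃[L] M).symm s, hβs⟩
          exact congrArg Subtype.val this
        show ((α : M ≃[L] M).comp ((β : M ≃[L] M).symm)) s = s
        rw [Equiv.comp_apply, h1]
        exact FirstOrder.Language.Equiv.apply_symm_apply _ s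
    -- the closure of S is contained in the (finite) fixed-point set of γ
    have hclos_fix : ((Substructure.closure L S : L.Substructure M) : Set M)
        ⊆ {m : M | γ m = m} := by
      intro m hm
      exact Hom.eqOn_closure (f := γ.toHom) (g := Hom.id L M) (fun s hs => hγfix s hs) hm
    have hfin : ((Substructure.closure L S : L.Substructure M) : Set M).Finite :=
      (hFix γ hγA hγ1).subset hclos_fix
    refine ⟨hfin, ?_⟩
    -- closure of S is A-invariant, so every element has finite orbit
    intro m hm
    have horb : orbit A m ⊆ ((Substructure.closure L S : L.Substructure M) : Set M) := by
      rintro y ⟨δ, hδA, rfl⟩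
      have hle : Substructure.closure L S ≤
          (Substructure.closure L S).comap δ.toHom := by
        rw [Substructure.closure_le]
        intro s hs
        exact Substructure.subset_closure (hSinv δ hδA s hs)
      exact hle hm
    exact hfin.subset horb
  have main : ∀ (n : ℕ) (x : Fin n → M), (∀ i, x i ∈ core L M A) →
      ((Substructure.closure L (Set.range x) : L.Substructure M) : Set M).Finite ∧
      ((Substructure.closure L (Set.range x) : L.Substructure M) : Set M) ⊆ core L M A := by
    intro n x hx
    set S : Set M := ⋃ i, orbit A (x i) with hS
    have hSfin : S.Finite := Set.finite_iUnion fun i => hx i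
    have hSinv : ∀ α ∈ A, ∀ s ∈ S, α s ∈ S := by
      rintro α hα s hs
      rw [Set.mem_iUnion] at hs ⊢
      obtain ⟨i, δ, hδA, rfl⟩ := hs
      exact ⟨i, α * δ, A.mul_mem hα hδA, rfl⟩
    have hsub : Set.range x ⊆ S := by
      rintro _ ⟨i, rfl⟩
      exact Set.mem_iUnion.2 ⟨i, 1, A.one_mem, rfl⟩
    have hmono : ((Substructure.closure L (Set.range x) : L.Substructure M) : Set M)
        ⊆ ((Substructure.closure L S : L.Substructure M) : Set M) :=
      Substructure.closure_mono hsub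
    obtain ⟨h1, h2⟩ := key S hSfin hSinv
    exact ⟨h1.subset hmono, fun m hm => h2 (hmono hm)⟩
  refine ⟨main, ⟨⟨core L M A, ?_⟩, rfl⟩⟩
  intro n f x hx
  have hmem : Structure.funMap f x ∈ Substructure.closure L (Set.range x) :=
    (Substructure.closure L (Set.range x)).fun_mem f x
      (fun i => Substructure.subset_closure ⟨i, rfl⟩)
  exact (main n x hx).2 hmem
end

section
/- Let L be a first-order language, let M be an infinite L-structure, and let A be a finitary group of automorphisms of M. Then every nonempty subset X ⊆ M that is definable with finitely many parameters from the locally finite core M_* contains a point of M_*, i.e., X ∩ M_* ≠ ∅. -/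
open FirstOrder Language

open StructAut

/-- If `M` is an infinite `L`-structure and `A` is a finitary group of
automorphisms of `M`, then every nonempty subset `X ⊆ M` definable with parameters from the
locally finite core `M_*` meets `M_*`. -/
theorem definable_set_meets_locallyFiniteCore
    (L : Language) (M : Type*) [L.Structure M] [Infinite M]
    (A : Subgroup (M ≃[L] M)) (hA : IsFinitary L M A)
    (X : Set M) (hX : X.Nonempty) (hdef : (core L M A).Definable₁ L X) :
    (X ∩ core L M A).Nonempty := by
  classical
  obtain ⟨hinf, -, hcond⟩ := hA
  rw [Set.Definable₁, Set.definable_iff_finitely_definable] at hdef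
  obtain ⟨A0, hA0, hd⟩ := hdef
  rw [Set.definable_iff_exists_formula_sum] at hd
  obtain ⟨φ, hφ⟩ := hd
  have hmem : ∀ m : M, m ∈ X ↔ φ.Realize (Sum.elim (↑) (fun _ : Fin 1 => m)) := by
    intro m
    have := Set.ext_iff.mp hφ (fun _ : Fin 1 => m)
    simpa using this
  -- pigeonhole: find two elements of A agreeing on A0
  haveI : Infinite ↥A := hinf
  haveI : ∀ a : (A0 : Set M), Finite (orbit A a.1) := fun a =>
    Set.Finite.to_subtype (hA0 a.2)
  haveI : Finite (A0 : Set M) := A0.finite_toSet.to_subtype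
  let F : ↥A → (∀ a : (A0 : Set M), orbit A a.1) := fun α a =>
    ⟨(α : M ≃[L] M) a.1, ⟨(α : M ≃[L] M), α.2, rfl⟩⟩
  obtain ⟨α, β, hne, hFeq⟩ := Finite.exists_ne_map_eq_of_infinite F
  set γ : ↥A := α⁻¹ * β with hγdef
  have hγne : γ ≠ 1 := by
    intro h
    exact hne (inv_mul_eq_one.mp h)
  have hfix : ∀ a : (A0 : Set M), (γ : M ≃[L] M) a.1 = a.1 := by
    intro a
    have h1 : ((α : M ≃[L] M)) a.1 = ((β : M ≃[L] M)) a.1 := by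
      have := congrFun hFeq a
      exact congrArg Subtype.val this
    show ((α⁻¹ * β : ↥A) : M ≃[L] M) a.1 = a.1
    have : ((α⁻¹ * β : ↥A) : M ≃[L] M) a.1
        = (α : M ≃[L] M).symm ((β : M ≃[L] M) a.1) := rfl
    rw [this, ← h1]
    exact (α : M ≃[L] M).left_inv a.1
  have hiff : ∀ x : M, (γ : M ≃[L] M) x ∈ X ↔ x ∈ X := by
    intro x
    rw [hmem, hmem]
    have hcomp : (Sum.elim (↑) (fun _ : Fin 1 => (γ : M ≃[L] M) x) :
        (A0 : Set M) ⊕ Fin 1 → M)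
        = (γ : M ≃[L] M) ∘ Sum.elim (↑) (fun _ : Fin 1 => x) := by
      funext v
      rcases v with a | i
      · exact (hfix a).symm
      · rfl
    rw [hcomp]
    exact StrongHomClass.realize_formula (γ : M ≃[L] M) φ
  have himg : (fun m => (γ : M ≃[L] M) m) '' X = X := by
    ext y
    constructor
    · rintro ⟨x, hx, rfl⟩
      exact (hiff x).mpr hx
    · intro hy
      refine ⟨(γ : M ≃[L] M).symm y, ?_, (γ : M ≃[L] M).apply_symm_apply y⟩
      apply (hiff _).mp
      rw [(γ : M ≃[L] M).apply_symm_apply y]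
      exact hy
  have hudef : (Set.univ : Set M).Definable₁ L X :=
    Set.Definable.mono (Set.definable_iff_finitely_definable.mpr
      ⟨A0, hA0, Set.definable_iff_exists_formula_sum.mpr ⟨φ, hφ⟩⟩)
      (Set.subset_univ (core L M A))
  have hγcne : (γ : M ≃[L] M) ≠ 1 := by
    intro h
    exact hγne (Subtype.ext h)
  obtain ⟨x, hxX, hxorb⟩ := hcond X hX hudef ⟨(γ : M ≃[L] M), γ.2, hγcne, himg⟩
  exact ⟨x, hxX, hxorb⟩
end

section
/- Let c be a natural number and let G be a group of centraliser dimension at most c. Then for every subset S ⊆ G there is a finite subset F ⊆ S with at most c elements such that the centralizer of S in G equals the centralizer of F in G. -/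
/-- A group `G` has *centraliser dimension at most `c`* if every strictly decreasing chain
of centralizers of subsets of `G` has length at most `c`. -/
def CentraliserDimLE (G : Type*) [Group G] (c : ℕ) : Prop :=
  ∀ (n : ℕ) (f : Fin (n + 1) → Set G),
    (∀ i : Fin n, Set.centralizer (f i.succ) ⊂ Set.centralizer (f i.castSucc)) → n ≤ c

/-- In a group of centraliser dimension at most `c`, the centralizer of any
subset `S` equals the centralizer of some finite subset `F ⊆ S` with at most `c` elements. -/
theorem centralizer_eq_centralizer_finite_subset
    (G : Type*) [Group G] (c : ℕ) (hcd : CentraliserDimLE G c) (S : Set G) :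
    ∃ F : Finset G, (F : Set G) ⊆ S ∧ F.card ≤ c ∧
      Set.centralizer S = Set.centralizer (F : Set G) := by
  classical
  have key : ∀ n : ℕ,
      (∃ F : Finset G, (F : Set G) ⊆ S ∧ F.card ≤ c ∧
        Set.centralizer S = Set.centralizer (F : Set G)) ∨
      (∃ f : Fin (n + 1) → Finset G,
        (∀ i, ((f i : Set G)) ⊆ S) ∧
        (∀ i : Fin (n + 1), (f i).card ≤ (i : ℕ)) ∧
        (∀ i : Fin n, Set.centralizer ((f i.succ : Set G)) ⊂
            Set.centralizer ((f i.castSucc : Set G))) ∧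
        Set.centralizer S ≠ Set.centralizer ((f (Fin.last n) : Set G))) := by
    intro n
    induction n with
    | zero =>
      by_cases h : Set.centralizer S = Set.centralizer ((∅ : Finset G) : Set G)
      · left; exact ⟨∅, by simp, by simp, h⟩
      · right
        exact ⟨fun _ => ∅, by simp, by simp, fun i => i.elim0, h⟩
    | succ n ih =>
      rcases ih with h | ⟨f, hsub, hcard, hchain, hne⟩
      · left; exact h
      set F := f (Fin.last n) with hF
      -- centralizer S ⊆ centralizer F, and they differ
      have hFS : (F : Set G) ⊆ S := hsub _
      have hSF : Set.centralizer S ⊆ Set.centralizer (F : Set G) :=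
        Set.centralizer_subset hFS
      have : ∃ g ∈ Set.centralizer (F : Set G), g ∉ Set.centralizer S := by
        by_contra h
        push_neg at h
        exact hne (le_antisymm hSF h)
      obtain ⟨g, hgF, hgS⟩ := this
      rw [Set.mem_centralizer_iff] at hgS
      push_neg at hgS
      obtain ⟨s, hsS, hscomm⟩ := hgS
      set F' : Finset G := insert s F with hF'
      have hF'S : (F' : Set G) ⊆ S := by
        rw [hF', Finset.coe_insert]
        exact Set.insert_subset hsS hFS
      have hstrict : Set.centralizer ((F' : Set G)) ⊂ Set.centralizer ((F : Set G)) := by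
        constructor
        · apply Set.centralizer_subset
          rw [hF', Finset.coe_insert]
          exact Set.subset_insert _ _
        · intro hle
          have hg' := hle hgF
          rw [Set.mem_centralizer_iff] at hg'
          refine hscomm (hg' s ?_)
          rw [hF', Finset.coe_insert]
          exact Set.mem_insert _ _
      -- extend the chain
      set f' : Fin (n + 2) → Finset G := Fin.snoc f F' with hf'
      have hf'cast : ∀ j : Fin (n + 1), f' j.castSucc = f j := fun j => Fin.snoc_castSucc ..
      have hf'last : f' (Fin.last (n + 1)) = F' := Fin.snoc_last ..
      have hchain' : ∀ i : Fin (n + 1),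
          Set.centralizer ((f' i.succ : Set G)) ⊂ Set.centralizer ((f' i.castSucc : Set G)) := by
        intro i
        refine Fin.lastCases ?_ ?_ i
        · rw [Fin.succ_last, hf'last, hf'cast]
          exact hstrict
        · intro j
          rw [Fin.succ_castSucc, hf'cast, hf'cast]
          exact hchain j
      have hlen : n + 1 ≤ c := hcd (n + 1) (fun i => ((f' i : Set G))) hchain'
      have hsub' : ∀ i, ((f' i : Set G)) ⊆ S := by
        intro i
        refine Fin.lastCases ?_ ?_ i
        · rw [hf'last]; exact hF'S
        · intro j; rw [hf'cast]; exact hsub j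
      have hcard' : ∀ i : Fin (n + 2), (f' i).card ≤ (i : ℕ) := by
        intro i
        refine Fin.lastCases ?_ ?_ i
        · rw [hf'last]
          calc F'.card ≤ F.card + 1 := Finset.card_insert_le _ _
            _ ≤ n + 1 := by
                have := hcard (Fin.last n)
                simpa using Nat.add_le_add_right this 1
            _ = ((Fin.last (n + 1) : Fin (n + 2)) : ℕ) := by simp
        · intro j; rw [hf'cast]; simpa using hcard j
      by_cases heq : Set.centralizer S = Set.centralizer ((F' : Set G))
      · left
        refine ⟨F', hF'S, ?_, heq⟩
        calc F'.card ≤ F.card + 1 := Finset.card_insert_le _ _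
          _ ≤ n + 1 := by
              have := hcard (Fin.last n); simpa using Nat.add_le_add_right this 1
          _ ≤ c := hlen
      · right
        exact ⟨f', hsub', hcard', hchain', by rw [hf'last]; exact heq⟩
  rcases key (c + 1) with h | ⟨f, _, _, hchain, _⟩
  · exact h
  · exfalso
    have := hcd (c + 1) (fun i => ((f i : Set G))) hchain
    omega
end

section
/- Let H be a group and let L be a normal subgroup of H that is the internal direct product of subgroups L_1, …, L_m (the L_i pairwise commute elementwise, generate L, and each L_i intersects the product of the others trivially). Suppose for each i there are a non-identity element x_i ∈ L_i and a positive integer N_i such that every element of L_i is a product of at most N_i conjugates, by elements of L_i, of x_i or x_i⁻¹. Then L equals the set of all products y_1 y_2 ⋯ y_m in which each y_i is a product of at most N_i conjugates, by elements of H, of x_i or x_i⁻¹. -/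
/-- `g` is a product of at most `N` conjugates, by elements of `K`, of `x` or `x⁻¹`. -/
def IsBddProdOfConjugates {H : Type*} [Group H] (K : Set H) (x : H) (N : ℕ) (g : H) : Prop :=
  ∃ n ≤ N, ∃ (h : Fin n → H) (ε : Fin n → Bool), (∀ i, h i ∈ K) ∧
    g = (List.ofFn fun i => h i * (if ε i then x else x⁻¹) * (h i)⁻¹).prod

private lemma noncommProd_univ_ofFn {M : Type*} [Monoid M] {m : ℕ} (f : Fin m → M) (c) :
    Finset.univ.noncommProd f c = (List.ofFn f).prod := by
  rw [Finset.noncommProd, ← Multiset.noncommProd_coe (List.ofFn f)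
    (by rw [show ((List.ofFn f : List M) : Multiset M) = Finset.univ.val.map f from
      (Fin.univ_val_map f).symm]; exact Finset.noncommProd_lemma Finset.univ f c)]
  congr 1
  exact Fin.univ_val_map f

/-- Let `L` be a normal subgroup of `H` which is the internal direct
product of subgroups `L 0, …, L (m-1)` (pairwise elementwise commuting, generating `L`, each
meeting the product of the others trivially).  If for each `i` there are a non-identity
`x i ∈ L i` and `N i > 0` such that every element of `L i` is a product of at most `N i`
conjugates, by elements of `L i`, of `x i` or `(x i)⁻¹`, then `L` is exactly the set of
products `y 0 * ⋯ * y (m-1)` where each `y i` is a product of at most `N i` conjugates, by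
elements of `H`, of `x i` or `(x i)⁻¹`. -/
theorem normal_internal_directProduct_eq_bddProducts
    (H : Type*) [Group H] (m : ℕ) (L : Subgroup H) (hLnormal : L.Normal)
    (Li : Fin m → Subgroup H)
    (hcomm : ∀ i j, i ≠ j → ∀ x ∈ Li i, ∀ y ∈ Li j, x * y = y * x)
    (hgen : (⨆ i, Li i) = L)
    (hdisj : ∀ i, Li i ⊓ (⨆ j ∈ ({i}ᶜ : Set (Fin m)), Li j) = ⊥)
    (x : Fin m → H) (hx : ∀ i, x i ∈ Li i) (hx1 : ∀ i, x i ≠ 1)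
    (N : Fin m → ℕ) (hN : ∀ i, 0 < N i)
    (hLi : ∀ i, ∀ g ∈ Li i, IsBddProdOfConjugates (Li i : Set H) (x i) (N i) g) :
    (L : Set H) = {g : H | ∃ y : Fin m → H,
      (∀ i, IsBddProdOfConjugates (Set.univ : Set H) (x i) (N i) (y i)) ∧
      g = (List.ofFn y).prod} := by
  have hLiL : ∀ i, Li i ≤ L := fun i => hgen ▸ le_iSup Li i
  ext g
  constructor
  · intro hg
    have hpair : Pairwise fun i j : Fin m => ∀ a b : H, a ∈ Li i → b ∈ Li j → Commute a b :=
      fun i j hij a b ha hb => hcomm i j hij a ha b hb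
    have hg' : g ∈ (Subgroup.noncommPiCoprod hpair).range := by
      rw [Subgroup.noncommPiCoprod_range, hgen]; exact hg
    obtain ⟨f, hf⟩ := hg'
    refine ⟨fun i => (f i : H), fun i => ?_, ?_⟩
    · obtain ⟨n, hn, h, ε, hh, heq⟩ := hLi i (f i) (f i).2
      exact ⟨n, hn, h, ε, fun _ => Set.mem_univ _, heq⟩
    · rw [← hf]
      exact noncommProd_univ_ofFn (fun i => ((f i : H)))
        (fun a _ b _ hab => hpair hab _ _ (f a).2 (f b).2)
  · rintro ⟨y, hy, rfl⟩
    show _ ∈ L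
    refine list_prod_mem ?_
    intro a ha
    rw [List.mem_ofFn] at ha
    obtain ⟨i, rfl⟩ := ha
    obtain ⟨n, hn, h, ε, -, heq⟩ := hy i
    rw [heq]
    refine list_prod_mem ?_
    intro b hb
    rw [List.mem_ofFn] at hb
    obtain ⟨j, rfl⟩ := hb
    have hxL : (if ε j then x i else (x i)⁻¹) ∈ L := by
      split
      · exact hLiL i (hx i)
      · exact inv_mem (hLiL i (hx i))
    exact hLnormal.conj_mem _ hxL (h j)
end

section
/- Let G and H be groups that are elementarily equivalent as structures in the language of groups, and let c be a natural number. If every strictly decreasing chain of centralizers of finite subsets of G has length at most c, then every strictly decreasing chain of centralizers of finite subsets of H has length at most c. -/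
open FirstOrder Language

/-- The function symbols of the first-order language of groups:
a binary multiplication, a unary inversion, and a constant for the identity. -/
inductive GroupFn : ℕ → Type
  | mul : GroupFn 2
  | inv : GroupFn 1
  | one : GroupFn 0

/-- The first-order language of groups. -/
def groupLang : Language where
  Functions := GroupFn
  Relations _ := Empty

/-- Any group is a structure in the language of groups in the natural way. -/
instance groupLangStructure (G : Type*) [Group G] : groupLang.Structure G where
  funMap {_} f v :=
    match f with
    | .mul => v 0 * v 1
    | .inv => (v 0)⁻¹
    | .one => 1
  RelMap {_} r _ := Empty.elim r


/-- Every strictly decreasing chain of centralizers of *finite* subsets of `G` has length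
at most `c`. -/
def FinCentChainLE (G : Type*) [Group G] (c : ℕ) : Prop :=
  ∀ (n : ℕ) (f : Fin (n + 1) → Finset G),
    (∀ i : Fin n,
      Set.centralizer (↑(f i.succ) : Set G) ⊂ Set.centralizer (↑(f i.castSucc) : Set G)) →
    n ≤ c

/-! A strict chain `C(F₀) ⊋ C(F₁) ⊋ ⋯ ⊋ C(Fₙ)` of centralizers of finite sets yields, for each
`i < n`, some `bᵢ ∈ Fᵢ₊₁` and `xᵢ ∈ C(Fᵢ)` that do not commute; then `xᵢ` commutes with every `bⱼ`,
`j < i`. Conversely such `b, x` give the strict chain `Fᵢ = {bⱼ | j < i}`. Hence a chain of length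
`n` exists iff an existential sentence in the language of groups holds, and elementary equivalence
transfers it. -/

open Set

section Witness

variable {G : Type*} [Group G] {n : ℕ}

def IsCentChainWitness (b x : Fin n → G) : Prop :=
  (∀ i j, j < i → Commute (b j) (x i)) ∧ ∀ i, ¬Commute (b i) (x i)

theorem exists_isCentChainWitness_of_centralizer_ssubset {f : Fin (n + 1) → Finset G}
    (hf : ∀ i : Fin n, centralizer (f i.succ : Set G) ⊂ centralizer (f i.castSucc : Set G)) :
    ∃ b x : Fin n → G, IsCentChainWitness b x := by
  have anti : Antitone fun i => centralizer (f i : Set G) :=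
    Fin.antitone_iff_succ_le.2 fun i => (hf i).subset
  have separate : ∀ i : Fin n, ∃ b ∈ f i.succ, ∃ x ∈ centralizer (f i.castSucc : Set G),
      ¬Commute b x := by
    intro i
    obtain ⟨x, hx, hx'⟩ := not_subset.1 (hf i).2
    simp only [mem_centralizer_iff, Finset.mem_coe, not_forall] at hx'
    obtain ⟨b, hb, hbx⟩ := hx'
    exact ⟨b, hb, x, hx, hbx⟩
  choose b hb x hx hbx using separate
  exact ⟨b, x, fun i j hji => anti (Fin.succ_le_castSucc_iff.2 hji) (hx i) (b j) (hb j), hbx⟩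

theorem exists_centralizer_ssubset_of_isCentChainWitness {b x : Fin n → G}
    (h : IsCentChainWitness b x) :
    ∃ f : Fin (n + 1) → Finset G,
      ∀ i : Fin n, centralizer (f i.succ : Set G) ⊂ centralizer (f i.castSucc : Set G) := by
  classical
  refine ⟨fun i => (Finset.univ.filter fun j => j.castSucc < i).image b, fun i => ⟨?_, ?_⟩⟩
  · refine centralizer_subset fun m hm => ?_
    simp only [Finset.coe_image, Finset.coe_filter, Finset.mem_univ, true_and, mem_image] at hm ⊢
    obtain ⟨j, hj, rfl⟩ := hm
    exact ⟨j, hj.trans Fin.castSucc_lt_succ, rfl⟩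
  · intro hsub
    refine h.2 i (hsub (fun m hm => ?_) (b i) ?_)
    · simp only [Finset.coe_image, Finset.coe_filter, Finset.mem_univ, true_and, mem_image,
        Fin.castSucc_lt_castSucc_iff] at hm
      obtain ⟨j, hj, rfl⟩ := hm
      exact h.1 i j hj
    · simp only [Finset.coe_image, Finset.coe_filter, Finset.mem_univ, true_and, mem_image]
      exact ⟨i, Fin.castSucc_lt_succ, rfl⟩

theorem exists_centralizer_ssubset_iff_exists_isCentChainWitness :
    (∃ f : Fin (n + 1) → Finset G,
      ∀ i : Fin n, centralizer (f i.succ : Set G) ⊂ centralizer (f i.castSucc : Set G)) ↔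
    ∃ b x : Fin n → G, IsCentChainWitness b x :=
  ⟨fun ⟨_, hf⟩ => exists_isCentChainWitness_of_centralizer_ssubset hf,
    fun ⟨_, _, h⟩ => exists_centralizer_ssubset_of_isCentChainWitness h⟩

end Witness

namespace groupLang

def commuteFormula {α : Type*} (a b : α) : groupLang.Formula α :=
  Term.equal (Functions.apply₂ GroupFn.mul (var a) (var b))
    (Functions.apply₂ GroupFn.mul (var b) (var a))

theorem realize_commuteFormula {G α : Type*} [Group G] (a b : α) (v : α → G) :
    (commuteFormula a b).Realize v ↔ Commute (v a) (v b) :=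
  Iff.rfl

/-- The variable `Sum.inl j` stands for `bⱼ` and `Sum.inr i` for `xᵢ`. -/
noncomputable def centChainFormula (n : ℕ) : groupLang.Formula (Fin n ⊕ Fin n) :=
  (Formula.iInf fun p : {p : Fin n × Fin n // p.2 < p.1} =>
      commuteFormula (Sum.inl p.1.2) (Sum.inr p.1.1)) ⊓
    Formula.iInf fun i => (commuteFormula (Sum.inl i) (Sum.inr i)).not

noncomputable def centChainSentence (n : ℕ) : groupLang.Sentence :=
  ((centChainFormula n).relabel Sum.inr).iExs (Fin n ⊕ Fin n)

theorem realize_centChainSentence (G : Type*) [Group G] (n : ℕ) :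
    G ⊨ centChainSentence n ↔ ∃ b x : Fin n → G, IsCentChainWitness b x := by
  simp only [Sentence.Realize, centChainSentence, centChainFormula, Formula.realize_iExs,
    Formula.realize_relabel, Formula.realize_inf, Formula.realize_iInf, Formula.realize_not,
    realize_commuteFormula, Function.comp_apply, Sum.elim_inr, Subtype.forall, Prod.forall]
  rw [(Equiv.sumArrowEquivProdArrow _ _ _).exists_congr_left, Prod.exists]
  rfl

end groupLang

open groupLang in
theorem finCentChainLE_iff_realize_centChainSentence (G : Type*) [Group G] (c : ℕ) :
    FinCentChainLE G c ↔ ∀ n, G ⊨ centChainSentence n → n ≤ c := by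
  simp only [realize_centChainSentence,
    ← exists_centralizer_ssubset_iff_exists_isCentChainWitness, FinCentChainLE, forall_exists_index]

/-- If `G` and `H` are elementarily equivalent groups (in the language of
groups) and every strictly decreasing chain of centralizers of finite subsets of `G` has
length at most `c`, then the same holds in `H`. -/
theorem finCentChainLE_of_elementarilyEquivalent
    (G H : Type*) [Group G] [Group H] (c : ℕ)
    (heq : groupLang.ElementarilyEquivalent G H)
    (hG : FinCentChainLE G c) :
    FinCentChainLE H c := by
  rw [finCentChainLE_iff_realize_centChainSentence] at hG ⊢
  exact fun n hH => hG n ((heq.realize_sentence _).2 hH)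
end
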